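/- For every integer m ≥ 4 there do not exist natural numbers d_1, d_2 and polynomials f_1, f_2 ∈ ℤ[x_1,…,x_m] with f_1 homogeneous of degree d_1 and f_2 homogeneous of degree d_2, such that for every m-tuple (a_1,…,a_m) of positive integers with sum n, ind((a_1,…,a_m), (n)) = gcd(f_1(a_1,…,a_m), f_2(a_1,…,a_m)), where the gcd of two integers is taken to be a nonnegative integer. -/

import Mathlib

open scoped Classical

/-- Vertices `j` and `k` of `{1,…,n}` (encoded as `Fin n`, vertex `v` is `v+1`) are joined by
an edge determined by the composition `a`. -/
def CompEdge {n : ℕ} (a : Composition n) (j k : Fin n) : Prop :=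
  j ≠ k ∧ ∃ i : Fin a.length,
    a.sizeUpTo i < (j : ℕ) + 1 ∧ (j : ℕ) + 1 ≤ a.sizeUpTo (i + 1) ∧
    a.sizeUpTo i < (k : ℕ) + 1 ∧ (k : ℕ) + 1 ≤ a.sizeUpTo (i + 1) ∧
    ((j : ℕ) + 1) + ((k : ℕ) + 1) = 2 * a.sizeUpTo i + a.blocksFun i + 1

lemma CompEdge.symm {n : ℕ} {a : Composition n} {j k : Fin n} (h : CompEdge a j k) :
    CompEdge a k j := by
  obtain ⟨hne, i, h1, h2, h3, h4, h5⟩ := h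
  exact ⟨hne.symm, i, h3, h4, h1, h2, by omega⟩

/-- The meander `M(a|b)` of the pair of compositions `(a, b)` of `n`. -/
def Meander {n : ℕ} (a b : Composition n) : SimpleGraph (Fin n) where
  Adj j k := CompEdge a j k ∨ CompEdge b j k
  symm := by
    refine ⟨fun j k h => ?_⟩
    rcases h with h | h
    · exact Or.inl h.symm
    · exact Or.inr h.symm
  loopless := by
    refine ⟨fun j h => ?_⟩
    rcases h with ⟨hne, _⟩ | ⟨hne, _⟩ <;> exact hne rfl

/-- A connected component of the meander is a cycle if each of its vertices is incident
to both a top edge and a bottom edge. -/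
def IsCycleComp {n : ℕ} (a b : Composition n) (c : (Meander a b).ConnectedComponent) : Prop :=
  ∀ v : Fin n, (Meander a b).connectedComponentMk v = c →
    (∃ w, CompEdge a v w) ∧ (∃ w, CompEdge b v w)

/-- The number of cycle components of the meander `M(a|b)`. -/
noncomputable def cycleCount {n : ℕ} (a b : Composition n) : ℕ :=
  Nat.card {c : (Meander a b).ConnectedComponent // IsCycleComp a b c}

/-- The number of path components of the meander `M(a|b)`. -/
noncomputable def pathCount {n : ℕ} (a b : Composition n) : ℕ :=
  Nat.card {c : (Meander a b).ConnectedComponent // ¬ IsCycleComp a b c}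

/-- The index `ind(a,b) = 2C + P - 1` of a pair of compositions of `n`. -/
noncomputable def seaweedInd {n : ℕ} (a b : Composition n) : ℕ :=
  2 * cycleCount a b + pathCount a b - 1

/-- `C(n,k)`: the number of ordered pairs of compositions of `n` of index `k`. -/
noncomputable def Cnk (n k : ℕ) : ℕ :=
  Nat.card {p : Composition n × Composition n // seaweedInd p.1 p.2 = k}

/-- The composition of `n` with the given list of positive parts. -/
def compOfList (n : ℕ) (l : List ℕ) (hpos : ∀ x ∈ l, 0 < x) (hsum : l.sum = n) :
    Composition n :=
  ⟨l, fun hi => hpos _ hi, hsum⟩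

/-!
Two evaluations suffice. At `(1,…,1)` the meander has no top arcs and its components are the
pairs `{j, m + 1 - j}`, so the index is `K = ⌈m/2⌉ - 1 ≥ 1`; at `(2,…,2)` every component is a
cycle and there are `⌈m/2⌉` of them, so the index is `2K + 1`. By homogeneity the values of `fᵢ`
at `(2,…,2)` are `2 ^ dᵢ` times their values `gᵢ` at `(1,…,1)`, so the odd number
`2K + 1 = gcd(2 ^ d₁ g₁, 2 ^ d₂ g₂)` divides `gcd(g₁, g₂) = K`, which is impossible.
-/

namespace Composition

variable {n M c : ℕ} (C : Composition n)

lemma sizeUpTo_of_blocks_eq_replicate (hC : C.blocks = List.replicate M c) (i : ℕ) :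
    C.sizeUpTo i = c * min i M := by
  simp [sizeUpTo, hC, List.take_replicate, List.sum_replicate, Nat.mul_comm]

lemma length_of_blocks_eq_replicate (hC : C.blocks = List.replicate M c) : C.length = M := by
  simp [length, hC]

lemma eq_mul_of_blocks_eq_replicate (hC : C.blocks = List.replicate M c) : n = c * M := by
  simpa [hC, Nat.mul_comm] using C.blocks_sum.symm

end Composition

open Composition in
lemma compEdge_iff_of_blocks_eq_replicate {n M c : ℕ} {C : Composition n}
    (hC : C.blocks = List.replicate M c) {j k : Fin n} :
    CompEdge C j k ↔ j ≠ k ∧ (j : ℕ) / c = k / c ∧ (j : ℕ) % c + k % c + 1 = c := by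
  have hsize := sizeUpTo_of_blocks_eq_replicate C hC
  have hlen := length_of_blocks_eq_replicate C hC
  have hjmod := Nat.div_add_mod j c
  have hkmod := Nat.div_add_mod k c
  have hsize₀ : ∀ i < M, C.sizeUpTo i = c * i := fun i hi => by
    rw [hsize, min_eq_left hi.le]
  have hsize₁ : ∀ i < M, C.sizeUpTo (i + 1) = c * i + c := fun i hi => by
    rw [hsize, min_eq_left hi, mul_add_one]
  constructor
  · rintro ⟨hne, i, hj₁, hj₂, hk₁, hk₂, hsum⟩
    have hi : (i : ℕ) < M := hlen ▸ i.2
    have hblock := C.sizeUpTo_succ' i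
    simp only [hsize₀ i hi, hsize₁ i hi] at hblock hj₁ hj₂ hk₁ hk₂ hsum
    have hdiv : ∀ x : ℕ, c * i < x + 1 → x + 1 ≤ c * i + c → x / c = i := fun x h₁ h₂ =>
      Nat.div_eq_of_lt_le (by rw [mul_comm]; omega) (by rw [add_one_mul, mul_comm]; omega)
    rw [hdiv j hj₁ hj₂] at hjmod ⊢
    rw [hdiv k hk₁ hk₂] at hkmod ⊢
    exact ⟨hne, rfl, by omega⟩
  · rintro ⟨hne, hdiv, hmod⟩
    have hc : 0 < c := by omega
    have hj : (j : ℕ) / c < M := by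
      rw [Nat.div_lt_iff_lt_mul hc, mul_comm, ← eq_mul_of_blocks_eq_replicate C hC]
      exact j.2
    have hblock := C.sizeUpTo_succ' ⟨_, hlen ▸ hj⟩
    refine ⟨hne, ⟨_, hlen ▸ hj⟩, ?_⟩
    dsimp only at hblock ⊢
    rw [hsize₀ _ hj, hsize₁ _ hj] at hblock ⊢
    rw [← hdiv] at hkmod
    have := Nat.mod_lt j hc
    have := Nat.mod_lt k hc
    omega

lemma compEdge_iff_of_blocks_eq_singleton {n : ℕ} {C : Composition n} (hC : C.blocks = [n])
    {j k : Fin n} : CompEdge C j k ↔ j ≠ k ∧ (j : ℕ) + k + 1 = n := by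
  rw [compEdge_iff_of_blocks_eq_replicate (M := 1) hC, Nat.div_eq_of_lt j.2,
    Nat.div_eq_of_lt k.2, Nat.mod_eq_of_lt j.2, Nat.mod_eq_of_lt k.2]
  simp

lemma SimpleGraph.natCard_connectedComponent_eq_of_surjective {V β : Type*} {G : SimpleGraph V}
    (φ : V → β) (hadj : ∀ v w, G.Adj v w → φ v = φ w) (hsurj : Function.Surjective φ)
    (hreach : ∀ v w, φ v = φ w → G.Reachable v w) :
    Nat.card G.ConnectedComponent = Nat.card β := by
  have hwalk : ∀ v w, G.Walk v w → φ v = φ w := by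
    intro v w p
    induction p with
    | nil => rfl
    | cons h _ ih => exact (hadj _ _ h).trans ih
  refine Nat.card_congr <| Equiv.ofBijective
    (SimpleGraph.ConnectedComponent.lift φ fun v w p _ => hwalk v w p) ⟨?_, ?_⟩
  · refine SimpleGraph.ConnectedComponent.ind₂ fun v w h => ?_
    exact SimpleGraph.ConnectedComponent.sound (hreach v w h)
  · intro b
    obtain ⟨v, rfl⟩ := hsurj b
    exact ⟨G.connectedComponentMk v, rfl⟩

def mirrorClass (N : ℕ) (x : Fin N) : Fin ((N + 1) / 2) :=
  ⟨min x (N - 1 - x), by omega⟩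

lemma mirrorClass_eq_iff {N : ℕ} {x y : Fin N} :
    mirrorClass N x = mirrorClass N y ↔ x = y ∨ (x : ℕ) + y + 1 = N := by
  simp only [mirrorClass, Fin.ext_iff]
  omega

lemma mirrorClass_surjective (N : ℕ) : Function.Surjective (mirrorClass N) := fun y =>
  ⟨⟨y, by omega⟩, Fin.ext <| by simp only [mirrorClass]; omega⟩

section Meander

variable {n : ℕ} {a b : Composition n}

lemma seaweedInd_of_forall_not_isCycleComp (h : ∀ c, ¬ IsCycleComp a b c) :
    seaweedInd a b = Nat.card (Meander a b).ConnectedComponent - 1 := by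
  have hcycle : cycleCount a b = 0 :=
    @Nat.card_of_isEmpty _ ⟨fun c => h c.1 c.2⟩
  rw [seaweedInd, hcycle, pathCount, Nat.card_congr (Equiv.subtypeUnivEquiv h), mul_zero,
    zero_add]

lemma seaweedInd_of_forall_isCycleComp (h : ∀ c, IsCycleComp a b c) :
    seaweedInd a b = 2 * Nat.card (Meander a b).ConnectedComponent - 1 := by
  have hpath : pathCount a b = 0 :=
    @Nat.card_of_isEmpty _ ⟨fun c => c.2 (h c.1)⟩
  rw [seaweedInd, hpath, cycleCount, Nat.card_congr (Equiv.subtypeUnivEquiv h), add_zero]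

end Meander

lemma not_compEdge_of_blocks_eq_replicate_one {n M : ℕ} {C : Composition n}
    (hC : C.blocks = List.replicate M 1) (j k : Fin n) : ¬ CompEdge C j k := by
  rw [compEdge_iff_of_blocks_eq_replicate hC, Nat.div_one, Nat.div_one, ← Fin.ext_iff]
  exact fun h => h.1 h.2.1

lemma seaweedInd_of_blocks_eq_replicate_one {n M : ℕ} {A B : Composition n}
    (hA : A.blocks = List.replicate M 1) (hB : B.blocks = [n]) :
    seaweedInd A B = (M + 1) / 2 - 1 := by
  obtain rfl : n = M := by simpa using Composition.eq_mul_of_blocks_eq_replicate A hA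
  have hadj : ∀ j k, (Meander A B).Adj j k ↔ j ≠ k ∧ (j : ℕ) + k + 1 = n := fun j k => by
    simp only [Meander, not_compEdge_of_blocks_eq_replicate_one hA, false_or,
      compEdge_iff_of_blocks_eq_singleton hB]
  rw [seaweedInd_of_forall_not_isCycleComp]
  · rw [SimpleGraph.natCard_connectedComponent_eq_of_surjective (mirrorClass n)
      (fun j k h => mirrorClass_eq_iff.2 <| .inr ((hadj j k).1 h).2) (mirrorClass_surjective n),
      Nat.card_eq_fintype_card, Fintype.card_fin]
    intro j k h
    by_cases hjk : j = k
    · exact hjk ▸ .rfl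
    · exact ((hadj j k).2 ⟨hjk, (mirrorClass_eq_iff.1 h).resolve_left hjk⟩).reachable
  · intro c hc
    obtain ⟨v, hv⟩ := c.exists_rep
    obtain ⟨⟨w, hw⟩, -⟩ := hc v hv
    exact not_compEdge_of_blocks_eq_replicate_one hA v w hw

/-- Every vertex lies on a top and a bottom arc, and the component of `j` is determined by the
mirror class of its top arc `j / 2` in `Fin M`. -/
lemma seaweedInd_of_blocks_eq_replicate_two {n M : ℕ} {A B : Composition n}
    (hA : A.blocks = List.replicate M 2) (hB : B.blocks = [n]) :
    seaweedInd A B = 2 * ((M + 1) / 2) - 1 := by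
  obtain rfl : n = 2 * M := Composition.eq_mul_of_blocks_eq_replicate A hA
  have htop : ∀ j k : Fin (2 * M), CompEdge A j k ↔ j ≠ k ∧ (j : ℕ) / 2 = k / 2 := fun j k => by
    rw [compEdge_iff_of_blocks_eq_replicate hA, Ne, Fin.ext_iff]
    omega
  have hbot : ∀ j k : Fin (2 * M), CompEdge B j k ↔ j ≠ k ∧ (j : ℕ) + k + 1 = 2 * M :=
    fun _ _ => compEdge_iff_of_blocks_eq_singleton hB
  rw [seaweedInd_of_forall_isCycleComp]
  · let half : Fin (2 * M) → Fin M := fun j => ⟨j / 2, by omega⟩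
    have half_val : ∀ j, (half j : ℕ) = j / 2 := fun _ => rfl
    have hhalf : ∀ j k, half j = half k → (Meander A B).Reachable j k := fun j k h => by
      by_cases hjk : j = k
      · exact hjk ▸ .rfl
      · exact SimpleGraph.Adj.reachable <| .inl <| (htop j k).2 ⟨hjk, Fin.ext_iff.1 h⟩
    rw [SimpleGraph.natCard_connectedComponent_eq_of_surjective (mirrorClass M ∘ half),
      Nat.card_eq_fintype_card, Fintype.card_fin]
    · rintro j k (h | h)
      · exact congrArg (mirrorClass M) (Fin.ext ((htop j k).1 h).2)
      · refine mirrorClass_eq_iff.2 (.inr ?_)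
        have := ((hbot j k).1 h).2
        simp only [half_val]
        omega
    · refine (mirrorClass_surjective M).comp fun i => ⟨⟨2 * i, by omega⟩, Fin.ext ?_⟩
      simp only [half_val]
      omega
    · intro j k h
      rcases mirrorClass_eq_iff.1 h with h | h
      · exact hhalf j k h
      · let j' : Fin (2 * M) := ⟨2 * M - 1 - j, by omega⟩
        have hjj' : (Meander A B).Adj j j' := .inr <| (hbot j j').2
          ⟨by simp only [Ne, Fin.ext_iff, j']; omega, by simp only [j']; omega⟩
        exact hjj'.reachable.trans <| hhalf j' k <| Fin.ext <| by
          simp only [half_val, j'] at h ⊢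
          omega
  · intro _ j _
    refine ⟨⟨⟨2 * (j / 2) + (1 - j % 2), by omega⟩, (htop _ _).2 ⟨?_, ?_⟩⟩,
      ⟨⟨2 * M - 1 - j, by omega⟩, (hbot _ _).2 ⟨?_, ?_⟩⟩⟩ <;>
    · simp only [Ne, Fin.ext_iff]
      omega

lemma MvPolynomial.IsHomogeneous.eval_smul {σ R : Type*} [CommSemiring R] {φ : MvPolynomial σ R}
    {n : ℕ} (hφ : φ.IsHomogeneous n) (r : R) (x : σ → R) :
    eval (r • x) φ = r ^ n * eval x φ := by
  simp only [eval_eq, Finset.mul_sum, Pi.smul_apply, smul_eq_mul, mul_pow,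
    Finset.prod_mul_distrib]
  refine Finset.sum_congr rfl fun s hs => ?_
  rw [Finset.prod_pow_eq_pow_sum, ← hφ.degree_eq_sum_deg_support hs]
  ring

lemma Int.gcd_pow_mul_dvd_gcd {c g₁ g₂ : ℤ} {d₁ d₂ : ℕ}
    (hc : IsCoprime ((Int.gcd (c ^ d₁ * g₁) (c ^ d₂ * g₂) : ℕ) : ℤ) c) :
    Int.gcd (c ^ d₁ * g₁) (c ^ d₂ * g₂) ∣ Int.gcd g₁ g₂ :=
  Int.natCast_dvd_natCast.1 <| Int.dvd_coe_gcd
    (hc.pow_right.dvd_of_dvd_mul_left (Int.gcd_dvd_left _ _))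
    (hc.pow_right.dvd_of_dvd_mul_left (Int.gcd_dvd_right _ _))

theorem no_linear_gcd_formula (m : ℕ) (hm : 4 ≤ m) :
    ¬ ∃ (d₁ d₂ : ℕ) (f₁ f₂ : MvPolynomial (Fin m) ℤ),
        f₁.IsHomogeneous d₁ ∧ f₂.IsHomogeneous d₂ ∧
        ∀ (a : Fin m → ℕ) (ha : ∀ i, 0 < a i),
          seaweedInd
            (compOfList (∑ i, a i) (List.ofFn a)
              (by intro x hx; obtain ⟨i, rfl⟩ := List.mem_ofFn.mp hx; exact ha i)
              (by rw [List.sum_ofFn]))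
            (compOfList (∑ i, a i) [∑ i, a i]
              (by
                intro x hx; simp only [List.mem_singleton] at hx; subst hx
                have hm0 : 0 < m := by omega
                exact Finset.sum_pos (fun i _ => ha i) ⟨⟨0, hm0⟩, Finset.mem_univ _⟩)
              (by simp)) =
          Int.gcd (MvPolynomial.eval (fun i => (a i : ℤ)) f₁)
            (MvPolynomial.eval (fun i => (a i : ℤ)) f₂) := by
  rintro ⟨d₁, d₂, f₁, f₂, hf₁, hf₂, hformula⟩
  have hones := hformula (fun _ => 1) fun _ => one_pos
  have htwos := hformula (fun _ => 2) fun _ => two_pos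
  rw [seaweedInd_of_blocks_eq_replicate_one (List.ofFn_const m 1) rfl] at hones
  rw [seaweedInd_of_blocks_eq_replicate_two (List.ofFn_const m 2) rfl,
    show (fun _ : Fin m => ((2 : ℕ) : ℤ)) = (2 : ℤ) • fun _ => ((1 : ℕ) : ℤ) by ext; simp,
    hf₁.eval_smul, hf₂.eval_smul] at htwos
  set g₁ := MvPolynomial.eval (fun _ => ((1 : ℕ) : ℤ)) f₁
  set g₂ := MvPolynomial.eval (fun _ => ((1 : ℕ) : ℤ)) f₂
  have hodd : IsCoprime ((Int.gcd (2 ^ d₁ * g₁) (2 ^ d₂ * g₂) : ℕ) : ℤ) 2 := by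
    rw [← htwos, show (2 : ℤ) = ((2 : ℕ) : ℤ) from rfl, Nat.isCoprime_iff_coprime,
      Nat.coprime_two_right, Nat.odd_iff]
    omega
  have hle : 2 * ((m + 1) / 2) - 1 ≤ (m + 1) / 2 - 1 :=
    Nat.le_of_dvd (by omega) (hones ▸ htwos ▸ Int.gcd_pow_mul_dvd_gcd hodd)
  omega
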